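/- arXiv:2011.03576 — 9 statements merged into one kernel-verified Lean document; each statement's English description precedes it below -/
import Mathlib

section
/- Let Γ be a finite simplicial graph and let u, v, w be three distinct vertices of Γ such that u ≤ v, u ≤ w, and (v,w|u) is not a SIL. Then v and w are adjacent in Γ. -/
open SimpleGraph

namespace RaagPaper

/-- The star of a vertex: the vertex together with its neighbours. -/
def star {V : Type} (G : SimpleGraph V) (v : V) : Set V := insert v (G.neighborSet v)

/-- Domination: `u ≤ v` iff `lk(u) ⊆ st(v)`. -/
def Dom {V : Type} (G : SimpleGraph V) (u v : V) : Prop := G.neighborSet u ⊆ star G v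

/-- Domination-equivalence of vertices. -/
def EquivDom {V : Type} (G : SimpleGraph V) (u v : V) : Prop := Dom G u v ∧ Dom G v u

/-- The domination-equivalence class of a vertex. -/
def eqClass {V : Type} (G : SimpleGraph V) (x : V) : Set V := {v | EquivDom G v x}

/-- `C` is (the vertex set of) a connected component of the subgraph of `G` induced on `S`. -/
def IsCC {V : Type} (G : SimpleGraph V) (S : Set V) (C : Set V) : Prop :=
  ∃ v : S, C = {w : V | ∃ h : w ∈ S, (G.induce S).Reachable ⟨w, h⟩ v}

/-- `(x,y|z)` is a separating intersection of links (SIL). -/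
def IsSIL {V : Type} (G : SimpleGraph V) (x y z : V) : Prop :=
  x ≠ y ∧ x ≠ z ∧ y ≠ z ∧ ¬ G.Adj x y ∧ ¬ G.Adj x z ∧ ¬ G.Adj y z ∧
  ∀ C : Set V, IsCC G ((G.neighborSet x ∩ G.neighborSet y)ᶜ) C → z ∈ C → x ∉ C ∧ y ∉ C

/-- The graph has no SIL. -/
def HasNoSIL {V : Type} (G : SimpleGraph V) : Prop := ∀ x y z, ¬ IsSIL G x y z

/-- `D` is a (possibly empty) union of connected components of `Γ ∖ st(x)`. -/
def IsUnionCC {V : Type} (G : SimpleGraph V) (x : V) (D : Set V) : Prop :=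
  ∃ 𝒞 : Set (Set V), (∀ C ∈ 𝒞, IsCC G ((star G x)ᶜ) C) ∧ D = ⋃₀ 𝒞

end RaagPaper

open RaagPaper in
/-- If `u ≤ v`, `u ≤ w` for distinct vertices `u,v,w` and `(v,w|u)` is not
a SIL, then `v` and `w` are adjacent. -/
theorem statement0 {V : Type} [Fintype V] (G : SimpleGraph V) (u v w : V)
    (huv : u ≠ v) (huw : u ≠ w) (hvw : v ≠ w)
    (h1 : Dom G u v) (h2 : Dom G u w)
    (hsil : ¬ IsSIL G v w u) :
    G.Adj v w := by

  by_contra hadj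
  -- u is adjacent to neither v nor w
  by_cases hAv : G.Adj u v
  · rcases h2 hAv with h | h
    · exact hvw h
    · exact hadj (G.adj_symm h)
  by_cases hAw : G.Adj u w
  · rcases h1 hAw with h | h
    · exact hvw h.symm
    · exact hadj h
  set S : Set V := (G.neighborSet v ∩ G.neighborSet w)ᶜ with hS
  -- u has no neighbours in S
  have hnon : ∀ a : V, G.Adj u a → a ∉ S := by
    intro a ha haS
    have hav : a ∈ RaagPaper.star G v := h1 ha
    have haw : a ∈ RaagPaper.star G w := h2 ha
    rcases hav with h | h
    · exact hAv (h ▸ ha)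
    rcases haw with h' | h'
    · exact hAw (h' ▸ ha)
    exact haS ⟨h, h'⟩
  -- hence everything reachable from u in the induced graph equals u
  have key : ∀ (hu : u ∈ S) (x : S), (G.induce S).Reachable ⟨u, hu⟩ x → (x : V) = u := by
    intro hu x hr
    obtain ⟨p⟩ := hr
    cases p with
    | nil => rfl
    | cons h p =>
      exact absurd (Subtype.mem _) (hnon _ h)
  apply hsil
  refine ⟨hvw, fun h => huv h.symm, fun h => huw h.symm, hadj,
    fun h => hAv (G.adj_symm h), fun h => hAw (G.adj_symm h), ?_⟩
  rintro C ⟨v₀, rfl⟩ ⟨hu, hru⟩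
  constructor
  · rintro ⟨hv, hrv⟩
    have := key hu ⟨v, hv⟩ (hru.trans hrv.symm)
    exact huv this.symm
  · rintro ⟨hw, hrw⟩
    have := key hu ⟨w, hw⟩ (hru.trans hrw.symm)
    exact huw this.symm
end

section
/- Let Γ be a finite simplicial graph, let x, y be vertices with x ≤ y, and let C be an x-component of Γ. Then C ∖ st(y) is a (possibly empty) union of y-components. -/
open SimpleGraph

namespace RaagPaper

/-- Key transfer lemma: a walk in `Γ ∖ st(y)` ending outside `st(x)` stays outside `st(x)`,
when `x ≤ y`. -/
lemma key {V : Type} (G : SimpleGraph V) (x y : V) (hxy : Dom G x y) :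
    ∀ (a b : ((star G y)ᶜ : Set V)), (G.induce ((star G y)ᶜ)).Walk a b →
    ∀ hb : (b : V) ∈ (star G x)ᶜ,
    ∃ h2 : (a : V) ∈ (star G x)ᶜ,
      (G.induce ((star G x)ᶜ)).Reachable ⟨a, h2⟩ ⟨b, hb⟩ := by
  intro a b p
  induction p with
  | nil => intro hb; exact ⟨hb, SimpleGraph.Reachable.refl _⟩
  | @cons u v w hadj p ih =>
    intro hb
    obtain ⟨h2, hr⟩ := ih hb
    have hGadj : G.Adj (u : V) (v : V) := hadj
    have hune : (u : V) ∉ star G x := by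
      intro hu
      rcases hu with hu | hu
      · exact v.2 (hxy (by rw [hu] at hGadj; exact hGadj))
      · exact u.2 (hxy hu)
    refine ⟨hune, ?_⟩
    have hadj' : (G.induce ((star G x)ᶜ)).Adj ⟨(u : V), hune⟩ ⟨(v : V), h2⟩ := hGadj
    exact hadj'.reachable.trans hr

end RaagPaper

open RaagPaper in
/-- If `x ≤ y` and `C` is an `x`-component, then `C ∖ st(y)` is a
(possibly empty) union of `y`-components. -/
theorem statement1 {V : Type} [Fintype V] (G : SimpleGraph V) (x y : V)
    (hxy : Dom G x y) (C : Set V) (hC : IsCC G ((star G x)ᶜ) C) :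
    IsUnionCC G y (C \ star G y) := by
  obtain ⟨v, hCeq⟩ := hC
  refine ⟨{D | IsCC G ((star G y)ᶜ) D ∧ D ⊆ C \ star G y}, fun D hD => hD.1, ?_⟩
  apply Set.Subset.antisymm
  · intro w hw
    have hwy : w ∈ ((star G y)ᶜ : Set V) := hw.2
    refine Set.mem_sUnion.mpr ⟨{w' : V | ∃ h : w' ∈ ((star G y)ᶜ : Set V),
      (G.induce ((star G y)ᶜ)).Reachable ⟨w', h⟩ ⟨w, hwy⟩}, ⟨⟨⟨w, hwy⟩, rfl⟩, ?_⟩,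
      ⟨hwy, SimpleGraph.Reachable.refl _⟩⟩
    -- this component is contained in C \ star G y
    intro w' hw'
    obtain ⟨h', hr⟩ := hw'
    have hwC : w ∈ C := hw.1
    rw [hCeq] at hwC
    obtain ⟨hwx, hreach⟩ := hwC
    obtain ⟨pw⟩ := hr
    obtain ⟨h2, hr2⟩ := key G x y hxy _ _ pw hwx
    refine ⟨?_, h'⟩
    rw [hCeq]
    exact ⟨h2, hr2.trans hreach⟩
  · intro w' hw'
    obtain ⟨D, hD, hwD⟩ := hw'
    exact hD.2 hwD
end

section
/- Let Γ be a finite simplicial graph, let v, x, y be vertices with x ≤ y, x ≠ y and v ≠ x, and let C be a v-component. If (v,y|x) is not a SIL, or if x,y ∉ C, or if x,y ∈ C ∪ st(v), then the images of the partial conjugation π^v_C and the transvection R_x^y in Out(A_Γ) commute. -/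
open SimpleGraph

namespace RaagPaper

/-- Defining relators of the RAAG: commutators of adjacent vertices. -/
def Rels {V : Type} (G : SimpleGraph V) : Set (FreeGroup V) :=
  {r | ∃ u v : V, G.Adj u v ∧
    r = FreeGroup.of u * FreeGroup.of v * (FreeGroup.of u)⁻¹ * (FreeGroup.of v)⁻¹}

/-- The right-angled Artin group on `G`. -/
abbrev Raag {V : Type} (G : SimpleGraph V) : Type := PresentedGroup (Rels G)

/-- The generator of `Raag G` corresponding to a vertex. -/
def gen {V : Type} (G : SimpleGraph V) (v : V) : Raag G := PresentedGroup.of v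

/-- `φ` is the partial conjugation conjugating the vertices of `C` by `x`. -/
def IsPartialConj {V : Type} (G : SimpleGraph V) (x : V) (C : Set V)
    (φ : MulAut (Raag G)) : Prop :=
  (∀ v ∈ C, φ (gen G v) = (gen G x)⁻¹ * gen G v * gen G x) ∧
  (∀ v ∉ C, φ (gen G v) = gen G v)

/-- `φ` is the transvection `R_u^v`, sending `u ↦ uv` and fixing all other vertices. -/
def IsTransvection {V : Type} (G : SimpleGraph V) (u v : V)
    (φ : MulAut (Raag G)) : Prop :=
  φ (gen G u) = gen G u * gen G v ∧ ∀ w : V, w ≠ u → φ (gen G w) = gen G w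

/-- The subgroup of inner automorphisms of a group. -/
def Inn (H : Type*) [Group H] : Subgroup (MulAut H) := (MulAut.conj : H →* MulAut H).range

instance Inn.normal (H : Type*) [Group H] : (Inn H).Normal := by
  constructor
  rintro a ⟨g, rfl⟩ f
  refine ⟨f g, ?_⟩
  ext x
  simp [MulAut.conj_apply, map_mul, map_inv]

/-- The outer automorphism group. -/
abbrev Out (H : Type*) [Group H] : Type _ := MulAut H ⧸ Inn H

/-- Projection from automorphisms to outer automorphisms. -/
def toOut (H : Type*) [Group H] : MulAut H →* Out H := QuotientGroup.mk' (Inn H)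

/-- The homomorphism sending an automorphism to the induced automorphism of the
abelianization. -/
def abAut (H : Type*) [Group H] : MulAut H →* MulAut (Abelianization H) where
  toFun e := MulEquiv.abelianizationCongr e
  map_one' := by
    apply MulEquiv.toMonoidHom_injective
    apply Abelianization.hom_ext
    ext x
    simp [abelianizationCongr_of]
  map_mul' f g := by
    apply MulEquiv.toMonoidHom_injective
    apply Abelianization.hom_ext
    ext x
    simp [abelianizationCongr_of, MulAut.mul_apply]

lemma abAut_inn (H : Type*) [Group H] : ∀ a ∈ Inn H, abAut H a = 1 := by
  rintro a ⟨g, rfl⟩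
  apply MulEquiv.toMonoidHom_injective
  apply Abelianization.hom_ext
  ext x
  simp [abAut, abelianizationCongr_of, MulAut.conj_apply, mul_comm]

/-- The standard map `ρ : Out(H) → Aut(Hᵃᵇ)` induced by acting on the abelianization. -/
def rhoOut (H : Type*) [Group H] : Out H →* MulAut (Abelianization H) :=
  QuotientGroup.lift (Inn H) (abAut H) (abAut_inn H)

end RaagPaper

namespace RaagAux

open RaagPaper

variable {V : Type} (G : SimpleGraph V)

lemma mem_star_iff {u v : V} : u ∈ star G v ↔ u = v ∨ G.Adj v u := by
  show u ∈ insert v (G.neighborSet v) ↔ _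
  simp [Set.mem_insert_iff]

lemma gen_comm {u w : V} (h : G.Adj u w) :
    gen G u * gen G w = gen G w * gen G u := by
  rw [← commutatorElement_eq_one_iff_mul_comm]
  have hr : (FreeGroup.of u * FreeGroup.of w * (FreeGroup.of u)⁻¹ * (FreeGroup.of w)⁻¹)
      ∈ Rels G := ⟨u, w, h, rfl⟩
  have h1 : PresentedGroup.mk (Rels G)
      (FreeGroup.of u * FreeGroup.of w * (FreeGroup.of u)⁻¹ * (FreeGroup.of w)⁻¹) = 1 := by
    exact (QuotientGroup.eq_one_iff _).mpr (Subgroup.subset_normalClosure hr)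
  simpa [commutatorElement_def, gen, PresentedGroup.of, map_mul, map_inv] using h1

lemma mulAut_ext {α β : MulAut (Raag G)} (h : ∀ w, α (gen G w) = β (gen G w)) : α = β := by
  apply MulEquiv.toMonoidHom_injective
  exact PresentedGroup.ext fun w => h w

lemma aut_comm_of_gen_eq (φ ψ : MulAut (Raag G))
    (h : ∀ w, φ (ψ (gen G w)) = ψ (φ (gen G w))) :
    toOut (Raag G) φ * toOut (Raag G) ψ = toOut (Raag G) ψ * toOut (Raag G) φ := by
  have heq : φ * ψ = ψ * φ := mulAut_ext G fun w => h w
  rw [← map_mul, ← map_mul, heq]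

lemma cc_subset {S C : Set V} (h : IsCC G S C) : C ⊆ S := by
  obtain ⟨v₀, rfl⟩ := h
  rintro w ⟨hw, -⟩
  exact hw

lemma cc_adj {S C : Set V} (h : IsCC G S C) {a b : V} (ha : a ∈ C) (hb : b ∈ S)
    (hab : G.Adj a b) : b ∈ C := by
  obtain ⟨v₀, rfl⟩ := h
  obtain ⟨haS, hr⟩ := ha
  refine ⟨hb, Reachable.trans ?_ hr⟩
  exact SimpleGraph.Adj.reachable (by simpa using hab.symm)

lemma isolated_cc {S : Set V} {x : V} (hx : ∀ u, G.Adj x u → u ∉ S) {D : Set V}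
    (hD : IsCC G S D) (hxD : x ∈ D) : ∀ z ∈ D, z = x := by
  obtain ⟨w₀, rfl⟩ := hD
  obtain ⟨hxS, hrx⟩ := hxD
  intro z hz
  obtain ⟨hzS, hrz⟩ := hz
  have hr : (G.induce S).Reachable ⟨x, hxS⟩ ⟨z, hzS⟩ := hrx.trans hrz.symm
  obtain ⟨p⟩ := hr
  have key : ∀ {a b : S} (_ : (G.induce S).Walk a b), (a : V) = x → (b : V) = x := by
    intro a b p
    cases p with
    | nil => exact id
    | @cons _ c _ hadj q =>
      intro hax
      have hadj' : G.Adj (a : V) (c : V) := by simpa using hadj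
      exact absurd c.2 (hx (c : V) (hax ▸ hadj'))
  exact key p rfl

lemma sil_of_split {v x y : V} {C : Set V} (hdom : Dom G x y) (hxyne : x ≠ y) (hvx : v ≠ x)
    (hC : IsCC G ((star G v)ᶜ) C) (hxs : x ∉ star G v) (hys : y ∉ star G v)
    (hsplit : (x ∈ C ∧ y ∉ C) ∨ (x ∉ C ∧ y ∈ C)) : IsSIL G v y x := by
  have hxyadj : ¬ G.Adj x y := by
    intro h
    rcases hsplit with ⟨hx1, hy1⟩ | ⟨hx1, hy1⟩
    · exact hy1 (cc_adj G hC hx1 hys h)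
    · exact hx1 (cc_adj G hC hy1 hxs h.symm)
  have hlk : ∀ u, G.Adj x u → u ∈ G.neighborSet v ∩ G.neighborSet y := by
    intro u hu
    have huy : u ∈ star G y := hdom (by simpa using hu)
    have huy' : G.Adj y u := by
      rcases (mem_star_iff G).mp huy with rfl | h
      · exact absurd hu hxyadj
      · exact h
    by_cases husv : u ∈ star G v
    · rcases (mem_star_iff G).mp husv with rfl | h
      · exact absurd ((mem_star_iff G).mpr (Or.inr hu.symm)) hxs
      · exact ⟨h, huy'⟩
    · exfalso
      rcases hsplit with ⟨hx1, hy1⟩ | ⟨hx1, hy1⟩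
      · have huC : u ∈ C := cc_adj G hC hx1 husv hu
        exact hy1 (cc_adj G hC huC hys huy'.symm)
      · have huC : u ∈ C := cc_adj G hC hy1 husv huy'
        exact hx1 (cc_adj G hC huC hxs hu.symm)
  have hvy : v ≠ y := fun h => hys (h ▸ (mem_star_iff G).mpr (Or.inl rfl))
  refine ⟨hvy, hvx, fun h => hxyne h.symm, ?_, ?_, fun h => hxyadj h.symm, ?_⟩
  · exact fun h => hys ((mem_star_iff G).mpr (Or.inr h))
  · exact fun h => hxs ((mem_star_iff G).mpr (Or.inr h))
  · intro D hD hxD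
    have hiso : ∀ u, G.Adj x u → u ∉ ((G.neighborSet v ∩ G.neighborSet y)ᶜ) :=
      fun u hu hmem => hmem (hlk u hu)
    have key := isolated_cc G hiso hD hxD
    exact ⟨fun hv => hvx (key v hv), fun hy => hxyne (key y hy).symm⟩

end RaagAux

open RaagPaper RaagAux in
theorem statement2' {V : Type} [Fintype V] (G : SimpleGraph V) (v x y : V)
    (hxy : Dom G x y) (hxyne : x ≠ y) (hvx : v ≠ x)
    (C : Set V) (hC : IsCC G ((star G v)ᶜ) C)
    (hyp : ¬ IsSIL G v y x ∨ (x ∉ C ∧ y ∉ C) ∨ (x ∈ C ∪ star G v ∧ y ∈ C ∪ star G v))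
    (φ ψ : MulAut (Raag G))
    (hφ : IsPartialConj G v C φ) (hψ : IsTransvection G x y ψ) :
    toOut (Raag G) φ * toOut (Raag G) ψ = toOut (Raag G) ψ * toOut (Raag G) φ := by
  classical
  have hCsub : C ⊆ (star G v)ᶜ := cc_subset G hC
  have offgen : ∀ w, w ≠ x → φ (ψ (gen G w)) = ψ (φ (gen G w)) := by
    intro w hw
    rw [hψ.2 w hw]
    by_cases hwC : w ∈ C
    · rw [hφ.1 w hwC, map_mul, map_mul, map_inv, hψ.2 v hvx, hψ.2 w hw]
    · rw [hφ.2 w hwC, hψ.2 w hw]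
  by_cases hxC : x ∈ C
  · have hxs : x ∉ star G v := hCsub hxC
    by_cases hyC : y ∈ C
    · -- both in C : commute in Aut
      apply aut_comm_of_gen_eq
      intro w
      by_cases hw : w = x
      · subst hw
        rw [hψ.1, map_mul, hφ.1 w hxC, hφ.1 y hyC, map_mul, map_mul, map_inv,
          hψ.2 v hvx, hψ.1]
        group
      · exact offgen w hw
    · by_cases hysv : y ∈ star G v
      · -- y in star v : commute in Aut using [v,y]=1
        have hcomm : gen G v * gen G y = gen G y * gen G v := by
          rcases (mem_star_iff G).mp hysv with rfl | h
          · rfl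
          · exact gen_comm G h
        apply aut_comm_of_gen_eq
        intro w
        by_cases hw : w = x
        · subst hw
          rw [hψ.1, map_mul, hφ.1 w hxC, hφ.2 y hyC, map_mul, map_mul, map_inv,
            hψ.2 v hvx, hψ.1]
          simp only [mul_assoc]
          rw [hcomm]
        · exact offgen w hw
      · -- impossible case
        exfalso
        rcases hyp with h1 | h2 | h3
        · exact h1 (sil_of_split G hxy hxyne hvx hC hxs hysv (Or.inl ⟨hxC, hyC⟩))
        · exact h2.1 hxC
        · rcases h3.2 with h | h
          · exact hyC h
          · exact hysv h
  · by_cases hyC : y ∈ C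
    · -- impossible case
      exfalso
      have hys : y ∉ star G v := hCsub hyC
      have hxs : x ∉ star G v := by
        intro hx
        rcases (mem_star_iff G).mp hx with rfl | h
        · exact hvx rfl
        · have : v ∈ star G y := hxy (by simpa using h.symm)
          rcases (mem_star_iff G).mp this with rfl | h'
          · exact hys ((mem_star_iff G).mpr (Or.inl rfl))
          · exact hys ((mem_star_iff G).mpr (Or.inr h'.symm))
      rcases hyp with h1 | h2 | h3
      · exact h1 (sil_of_split G hxy hxyne hvx hC hxs hys (Or.inr ⟨hxC, hyC⟩))
      · exact h2.2 hyC
      · rcases h3.1 with h | h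
        · exact hxC h
        · exact hxs h
    · -- neither in C : commute in Aut
      apply aut_comm_of_gen_eq
      intro w
      by_cases hw : w = x
      · subst hw
        rw [hψ.1, map_mul, hφ.2 w hxC, hφ.2 y hyC, hψ.1]
      · exact offgen w hw


open RaagPaper in
/-- Under the stated hypotheses, the images of the partial conjugation
`π^v_C` and the transvection `R_x^y` commute in `Out(A_Γ)`. -/
theorem statement2 {V : Type} [Fintype V] (G : SimpleGraph V) (v x y : V)
    (hxy : Dom G x y) (hxyne : x ≠ y) (hvx : v ≠ x)
    (C : Set V) (hC : IsCC G ((star G v)ᶜ) C)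
    (hyp : ¬ IsSIL G v y x ∨ (x ∉ C ∧ y ∉ C) ∨ (x ∈ C ∪ star G v ∧ y ∈ C ∪ star G v))
    (φ ψ : MulAut (Raag G))
    (hφ : IsPartialConj G v C φ) (hψ : IsTransvection G x y ψ) :
    toOut (Raag G) φ * toOut (Raag G) ψ = toOut (Raag G) ψ * toOut (Raag G) φ :=
  statement2' G v x y hxy hxyne hvx C hC hyp φ ψ hφ hψ
end

section
/- A finite simplicial graph Γ satisfies condition (A2') if and only if for every vertex x of Γ and every x-component C, the partial conjugation π^x_C is virtually obtained from dominated components. -/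
open SimpleGraph

namespace RaagPaper

/-- Auxiliary definition: some nonzero power of `π^x_C` can be written in `Out(A_Γ)` as a
product of partial conjugations (or their inverses) with multiplier `x` whose supports
are `y_i`-components for vertices `y_i` satisfying the predicate `P`. -/
def VirtObtAux {V : Type} (G : SimpleGraph V) (x : V) (C : Set V) (P : V → Prop) : Prop :=
  ∃ n : ℤ, n ≠ 0 ∧
    ∃ (m : ℕ) (y : Fin m → V) (D : Fin m → Set V) (ε : Fin m → ℤ)
      (φ : MulAut (Raag G)) (ψ : Fin m → MulAut (Raag G)),
      (∀ i, P (y i)) ∧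
      (∀ i, IsCC G ((star G (y i))ᶜ) (D i)) ∧
      (∀ i, ε i = 1 ∨ ε i = -1) ∧
      IsPartialConj G x C φ ∧
      (∀ i, IsPartialConj G x (D i) (ψ i)) ∧
      (toOut (Raag G) φ) ^ n
        = (List.ofFn fun i => (toOut (Raag G) (ψ i)) ^ (ε i)).prod

/-- `π^x_C` is virtually obtained from dominated components. -/
def VirtObtDom {V : Type} (G : SimpleGraph V) (x : V) (C : Set V) : Prop :=
  VirtObtAux G x C (fun y => Dom G y x ∧ y ≠ x)

/-- `π^x_C` is virtually obtained from dominated non-equivalent components. -/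
def VirtObtNE {V : Type} (G : SimpleGraph V) (x : V) (C : Set V) : Prop :=
  VirtObtAux G x C (fun y => Dom G y x ∧ ¬ EquivDom G y x)

/-- The pair `(X,C)`, of an equivalence class and an `X`-component, is non-principal. -/
def NonPrincipal {V : Type} (G : SimpleGraph V) (X C : Set V) : Prop :=
  ∀ x ∈ X, IsCC G ((star G x)ᶜ) C → VirtObtNE G x C

/-- The pair `(X,C)` is principal. -/
def Principal {V : Type} (G : SimpleGraph V) (X C : Set V) : Prop :=
  ¬ NonPrincipal G X C

/-- Condition (A2'): every principal pair `(X,C)` has `|X| > 1`. -/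
def CondA2' {V : Type} (G : SimpleGraph V) : Prop :=
  ∀ X C : Set V, (∃ x : V, X = eqClass G x) → (∃ x ∈ X, IsCC G ((star G x)ᶜ) C) →
    Principal G X C → X.Nontrivial

end RaagPaper

/-!
If the equivalence class of `x` contains a vertex `y ≠ x`, every `x`-component `C` is also a
`y`-component, unless `C = {y}`: for adjacent `x, y` the stars coincide, and otherwise
`lk x = lk y`, so `y` is isolated in `Γ ∖ st(x)` and `x` in `Γ ∖ st(y)`. In the exceptional
case, `π^x_{y}` composed with all `π^x_D`, `D` a `y`-component, is inner. Hence under (A2')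
every `π^x_C` is virtually obtained from dominated components, either from non-equivalent ones
or from those of an equivalent `y`. Conversely, if the class of `x` is `{x}`, the vertices
`y ≤ x` with `y ≠ x` are exactly those not equivalent to `x`.
-/

namespace RaagPaper

variable {V : Type} {G : SimpleGraph V}

lemma mem_star_iff {x v : V} : v ∈ star G x ↔ v = x ∨ G.Adj x v := by
  simp [star]

lemma Dom.refl (x : V) : Dom G x x := fun _ hv => Set.mem_insert_of_mem _ hv

lemma Dom.trans {u v w : V} (huv : Dom G u v) (hvw : Dom G v w) : Dom G u w := by
  intro z (huz : G.Adj u z)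
  rcases mem_star_iff.mp (huv huz) with rfl | hvz
  · rcases mem_star_iff.mp (hvw huz.symm) with rfl | hwu
    · exact mem_star_iff.mpr (Or.inr huz)
    · rcases mem_star_iff.mp (huv hwu.symm) with rfl | hzw
      · exact mem_star_iff.mpr (Or.inl rfl)
      · exact mem_star_iff.mpr (Or.inr hzw.symm)
  · exact hvw hvz

lemma EquivDom.refl (x : V) : EquivDom G x x := ⟨Dom.refl x, Dom.refl x⟩

lemma EquivDom.trans {u v w : V} (huv : EquivDom G u v) (hvw : EquivDom G v w) :
    EquivDom G u w :=
  ⟨huv.1.trans hvw.1, hvw.2.trans huv.2⟩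

lemma EquivDom.neighborSet_eq {x y : V} (he : EquivDom G y x) (hxy : ¬ G.Adj x y) :
    G.neighborSet x = G.neighborSet y := by
  ext v
  constructor
  · intro (hxv : G.Adj x v)
    rcases mem_star_iff.mp (he.2 hxv) with rfl | hyv
    · exact absurd hxv hxy
    · exact hyv
  · intro (hyv : G.Adj y v)
    rcases mem_star_iff.mp (he.1 hyv) with rfl | hxv
    · exact absurd hyv.symm hxy
    · exact hxv

lemma EquivDom.star_eq {x y : V} (he : EquivDom G y x) (hxy : G.Adj x y) :
    star G x = star G y := by
  ext v
  simp only [mem_star_iff]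
  constructor
  · rintro (rfl | hxv)
    · exact Or.inr hxy.symm
    · exact mem_star_iff.mp (he.2 hxv)
  · rintro (rfl | hyv)
    · exact Or.inr hxy
    · exact mem_star_iff.mp (he.1 hyv)

section Components

variable (G) in
def componentIn (S : Set V) (c : V) : Set V :=
  {w | ∃ p : G.Walk w c, ∀ z ∈ p.support, z ∈ S}

variable {S : Set V} {c u v w z : V}

lemma induce_reachable_iff (hu : u ∈ S) (hv : v ∈ S) :
    (G.induce S).Reachable ⟨u, hu⟩ ⟨v, hv⟩ ↔
      ∃ p : G.Walk u v, ∀ z ∈ p.support, z ∈ S := by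
  constructor
  · rintro ⟨p⟩
    refine ⟨(p.map (Embedding.induce S).toHom : G.Walk u v), fun z hz => ?_⟩
    obtain ⟨z, -, rfl⟩ := List.mem_map.mp ((Walk.support_map _ p) ▸ hz)
    exact z.2
  · rintro ⟨p, hp⟩
    exact ⟨p.induce S hp⟩

lemma isCC_iff {C : Set V} : IsCC G S C ↔ ∃ c ∈ S, C = componentIn G S c := by
  have hcomp : ∀ c (hc : c ∈ S),
      {w | ∃ hw : w ∈ S, (G.induce S).Reachable ⟨w, hw⟩ ⟨c, hc⟩} = componentIn G S c :=
    fun c hc => Set.ext fun w => ⟨fun ⟨hw, h⟩ => (induce_reachable_iff hw hc).mp h,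
      fun ⟨p, hp⟩ =>
        ⟨hp w p.start_mem_support, (induce_reachable_iff _ hc).mpr ⟨p, hp⟩⟩⟩
  constructor
  · rintro ⟨⟨c, hc⟩, rfl⟩
    exact ⟨c, hc, hcomp c hc⟩
  · rintro ⟨c, hc, rfl⟩
    exact ⟨⟨c, hc⟩, (hcomp c hc).symm⟩

lemma componentIn_subset : componentIn G S c ⊆ S :=
  fun w ⟨p, hp⟩ => hp w p.start_mem_support

lemma mem_componentIn_self (hc : c ∈ S) : c ∈ componentIn G S c :=
  ⟨Walk.nil, by simpa using hc⟩

lemma mem_componentIn_comm : w ∈ componentIn G S c ↔ c ∈ componentIn G S w := by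
  constructor <;> exact fun ⟨p, hp⟩ => ⟨p.reverse, by simpa using hp⟩

lemma mem_componentIn_trans (hu : u ∈ componentIn G S w) (hw : w ∈ componentIn G S c) :
    u ∈ componentIn G S c := by
  obtain ⟨q, hq⟩ := hu
  obtain ⟨p, hp⟩ := hw
  refine ⟨q.append p, fun z hz => ?_⟩
  rcases (Walk.mem_support_append_iff q p).mp hz with h | h
  exacts [hq z h, hp z h]

lemma componentIn_eq_of_mem (hw : w ∈ componentIn G S c) :
    componentIn G S w = componentIn G S c :=
  Set.ext fun _ => ⟨fun hu => mem_componentIn_trans hu hw,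
    fun hu => mem_componentIn_trans hu (mem_componentIn_comm.mp hw)⟩

lemma mem_componentIn_of_adj (hu : u ∈ componentIn G S c) (hv : v ∈ S) (huv : G.Adj u v) :
    v ∈ componentIn G S c :=
  mem_componentIn_trans ⟨Walk.cons huv.symm Walk.nil, by simp [hv, componentIn_subset hu]⟩ hu

lemma IsCC.disjoint_of_ne {C₁ C₂ : Set V} (h₁ : IsCC G S C₁) (h₂ : IsCC G S C₂)
    (hne : C₁ ≠ C₂) : Disjoint C₁ C₂ := by
  obtain ⟨c₁, -, rfl⟩ := isCC_iff.mp h₁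
  obtain ⟨c₂, -, rfl⟩ := isCC_iff.mp h₂
  refine Set.disjoint_left.mpr fun w hw₁ hw₂ => hne ?_
  rw [← componentIn_eq_of_mem hw₁, ← componentIn_eq_of_mem hw₂]

lemma componentIn_diff_singleton (hz : z ∉ componentIn G S c) :
    componentIn G (S \ {z}) c = componentIn G S c := by
  classical
  refine Set.ext fun w =>
    ⟨fun ⟨p, hp⟩ => ⟨p, fun u hu => (hp u hu).1⟩, fun ⟨p, hp⟩ => ?_⟩
  refine ⟨p, fun u hu => ⟨hp u hu, ?_⟩⟩
  rintro rfl
  exact hz ⟨p.dropUntil u hu, fun v hv => hp v (p.support_dropUntil_subset_support hu hv)⟩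

lemma eq_of_mem_componentIn_of_isolated (hz : ∀ w ∈ S, ¬ G.Adj z w)
    (h : z ∈ componentIn G S c) : c = z := by
  obtain ⟨p, hp⟩ := h
  cases p with
  | nil => rfl
  | cons hadj q => exact absurd hadj (hz _ (hp _ (by simp [q.start_mem_support])))

lemma componentIn_eq_singleton_of_isolated (hz : ∀ w ∈ S, ¬ G.Adj z w) (hzS : z ∈ S) :
    componentIn G S z = {z} := by
  refine Set.ext fun w =>
    ⟨fun hw => eq_of_mem_componentIn_of_isolated hz (mem_componentIn_comm.mp hw), ?_⟩
  rintro rfl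
  exact mem_componentIn_self hzS

end Components

section Equivalent

variable {x y : V} {C : Set V}

lemma not_adj_of_neighborSet_eq (hlk : G.neighborSet x = G.neighborSet y) :
    ∀ w ∈ (star G x)ᶜ, ¬ G.Adj y w := fun w hw hyw =>
  hw (mem_star_iff.mpr (Or.inr (hlk ▸ hyw : w ∈ G.neighborSet x)))

lemma isCC_star_of_neighborSet_eq (hlk : G.neighborSet x = G.neighborSet y)
    (hC : IsCC G (star G x)ᶜ C) (hyC : y ∉ C) : IsCC G (star G y)ᶜ C := by
  obtain ⟨c, hc, rfl⟩ := isCC_iff.mp hC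
  have hdiff : (star G x)ᶜ \ {y} = (star G y)ᶜ \ {x} := by
    ext v
    have := Set.ext_iff.mp hlk v
    simp only [mem_neighborSet] at this
    simp only [Set.mem_sdiff, Set.mem_compl_iff, mem_star_iff, Set.mem_singleton_iff, this]
    tauto
  have hcy : c ∈ (star G y)ᶜ \ {x} :=
    hdiff ▸ ⟨hc, fun (h : c = y) => hyC (h ▸ mem_componentIn_self hc)⟩
  have hxc : x ∉ componentIn G (star G y)ᶜ c := fun hx =>
    hcy.2 (eq_of_mem_componentIn_of_isolated (not_adj_of_neighborSet_eq hlk.symm) hx)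
  refine isCC_iff.mpr ⟨c, hcy.1, ?_⟩
  rw [← componentIn_diff_singleton hyC, hdiff, componentIn_diff_singleton hxc]

lemma isCC_eq_singleton_of_neighborSet_eq (hlk : G.neighborSet x = G.neighborSet y)
    (hC : IsCC G (star G x)ᶜ C) (hyC : y ∈ C) : C = {y} := by
  obtain ⟨c, -, rfl⟩ := isCC_iff.mp hC
  rw [← componentIn_eq_of_mem hyC]
  exact componentIn_eq_singleton_of_isolated (not_adj_of_neighborSet_eq hlk)
    (componentIn_subset hyC)

variable (G) in
/-- Sufficient for conjugating the generators in `S` by `x` to extend to an automorphism of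
`A_Γ`. -/
def StarSeparated (x : V) (S : Set V) : Prop :=
  ∀ u ∈ S, ∀ v, G.Adj u v → v ∈ S ∨ v ∈ star G x

lemma starSeparated_of_isCC (hlk : G.neighborSet x = G.neighborSet y) {D : Set V}
    (hD : IsCC G (star G y)ᶜ D) : StarSeparated G x D := by
  obtain ⟨c, -, rfl⟩ := isCC_iff.mp hD
  intro u hu v huv
  by_cases hv : v ∈ (star G y)ᶜ
  · exact Or.inl (mem_componentIn_of_adj hu hv huv)
  · right
    rcases mem_star_iff.mp (Set.notMem_compl_iff.mp hv) with rfl | hyv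
    · exact absurd (mem_star_iff.mpr (Or.inr huv.symm)) (componentIn_subset hu)
    · exact mem_star_iff.mpr (Or.inr (hlk ▸ hyv : v ∈ G.neighborSet x))

end Equivalent

section PartialConjugation

lemma gen_commute {u v : V} (h : G.Adj u v) : Commute (gen G u) (gen G v) := by
  refine commutatorElement_eq_one_iff_commute.mp ?_
  have := PresentedGroup.one_of_mem (rels := Rels G) ⟨u, v, h, rfl⟩
  simp only [map_mul, map_inv] at this
  rw [commutatorElement_def]
  exact this

lemma raag_hom_ext {H : Type*} [Group H] {f f' : Raag G →* H}
    (h : ∀ v, f (gen G v) = f' (gen G v)) : f = f' :=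
  PresentedGroup.ext h

lemma mulAut_ext {φ ψ : MulAut (Raag G)} (h : ∀ v, φ (gen G v) = ψ (gen G v)) : φ = ψ :=
  MulEquiv.toMonoidHom_injective (raag_hom_ext h)

variable {x : V} {S : Set V} {g : Raag G}

open Classical in
variable (G) in
noncomputable def conjOnFun (S : Set V) (g : Raag G) (v : V) : Raag G :=
  if v ∈ S then g⁻¹ * gen G v * g else gen G v

lemma lift_conjOnFun_rels (hS : StarSeparated G x S)
    (hg : ∀ w ∈ star G x, Commute g (gen G w)) :
    ∀ r ∈ Rels G, FreeGroup.lift (conjOnFun G S g) r = 1 := by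
  rintro _ ⟨u, v, huv, rfl⟩
  rw [← commutatorElement_def, map_commutatorElement, commutatorElement_eq_one_iff_commute,
    FreeGroup.lift_apply_of, FreeGroup.lift_apply_of]
  have mixed : ∀ a b, G.Adj a b → a ∈ S → b ∉ S →
      Commute (g⁻¹ * gen G a * g) (gen G b) := by
    intro a b hab ha hb
    have hgb := hg b ((hS a ha b hab).resolve_left hb)
    exact (hgb.inv_left.mul_left (gen_commute hab)).mul_left hgb
  by_cases hu : u ∈ S <;> by_cases hv : v ∈ S <;>
    simp only [conjOnFun, hu, hv, if_true, if_false]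
  · simpa [MulAut.conj_apply] using (gen_commute huv).map (MulAut.conj g⁻¹)
  · exact mixed u v huv hu hv
  · exact (mixed v u huv.symm hv hu).symm
  · exact gen_commute huv

/-- For `g = x` this is `π^x_S`, for `g = x⁻¹` its inverse. -/
noncomputable def conjOn (hS : StarSeparated G x S)
    (hg : ∀ w ∈ star G x, Commute g (gen G w)) : Raag G →* Raag G :=
  PresentedGroup.toGroup (lift_conjOnFun_rels hS hg)

variable {hS : StarSeparated G x S} {hg : ∀ w ∈ star G x, Commute g (gen G w)} {v : V}

lemma conjOn_gen_of_mem (hv : v ∈ S) : conjOn hS hg (gen G v) = g⁻¹ * gen G v * g := by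
  simp [conjOn, gen, PresentedGroup.toGroup.of, conjOnFun, hv]

lemma conjOn_gen_of_not_mem (hv : v ∉ S) : conjOn hS hg (gen G v) = gen G v := by
  simp [conjOn, gen, PresentedGroup.toGroup.of, conjOnFun, hv]

lemma conjOn_gen_of_commute (hgv : Commute g (gen G v)) : conjOn hS hg (gen G v) = gen G v := by
  by_cases hv : v ∈ S
  · rw [conjOn_gen_of_mem hv, mul_assoc, ← hgv.eq, inv_mul_cancel_left]
  · exact conjOn_gen_of_not_mem hv

lemma commute_gen_of_mem_star {w : V} (hw : w ∈ star G x) : Commute (gen G x) (gen G w) := by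
  rcases mem_star_iff.mp hw with rfl | hxw
  exacts [Commute.refl _, gen_commute hxw]

lemma StarSeparated.exists_isPartialConj (hS : StarSeparated G x S) :
    ∃ φ : MulAut (Raag G), IsPartialConj G x S φ := by
  let f := conjOn hS fun _ => commute_gen_of_mem_star
  let f' := conjOn hS fun _ hw => (commute_gen_of_mem_star hw).inv_left
  have hfx : f (gen G x) = gen G x := conjOn_gen_of_commute (Commute.refl _)
  have hf'x : f' (gen G x) = gen G x := conjOn_gen_of_commute (Commute.refl _).inv_left
  have hf'f : f'.comp f = MonoidHom.id _ := raag_hom_ext fun v => by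
    by_cases hv : v ∈ S
    · simp [f, f', conjOn_gen_of_mem hv, hf'x, mul_assoc]
    · simp [f, f', conjOn_gen_of_not_mem hv]
  have hff' : f.comp f' = MonoidHom.id _ := raag_hom_ext fun v => by
    by_cases hv : v ∈ S
    · simp [f, f', conjOn_gen_of_mem hv, hfx, mul_assoc]
    · simp [f, f', conjOn_gen_of_not_mem hv]
  refine ⟨MonoidHom.toMulEquiv f f' hf'f hff', fun v hv => ?_, fun v hv => ?_⟩
  exacts [(conjOn_gen_of_mem hv : f (gen G v) = _), (conjOn_gen_of_not_mem hv : f (gen G v) = _)]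

variable {T : Set V} {φ ψ : MulAut (Raag G)}

lemma IsPartialConj.apply_gen_self (h : IsPartialConj G x S φ) : φ (gen G x) = gen G x := by
  by_cases hx : x ∈ S
  · rw [h.1 x hx, inv_mul_cancel, one_mul]
  · exact h.2 x hx

lemma IsPartialConj.mul (hφ : IsPartialConj G x S φ) (hψ : IsPartialConj G x T ψ)
    (hST : Disjoint S T) : IsPartialConj G x (S ∪ T) (φ * ψ) := by
  refine ⟨fun v hv => ?_, fun v hv => ?_⟩
  · rcases hv with hvS | hvT
    · rw [MulAut.mul_apply, hψ.2 v (Set.disjoint_left.mp hST hvS), hφ.1 v hvS]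
    · rw [MulAut.mul_apply, hψ.1 v hvT, map_mul, map_mul, map_inv, hφ.apply_gen_self,
        hφ.2 v (Set.disjoint_right.mp hST hvT)]
  · rw [Set.mem_union, not_or] at hv
    rw [MulAut.mul_apply, hψ.2 v hv.2, hφ.2 v hv.1]

lemma isPartialConj_list_prod (L : List (Set V)) (ψ : Set V → MulAut (Raag G))
    (hψ : ∀ D ∈ L, IsPartialConj G x D (ψ D)) (hL : L.Pairwise Disjoint) :
    IsPartialConj G x (⋃ D ∈ L, D) (L.map ψ).prod := by
  induction L with
  | nil => simp [IsPartialConj]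
  | cons D L ih =>
    rw [List.pairwise_cons] at hL
    simp only [List.mem_cons, Set.iUnion_iUnion_eq_or_left, List.map_cons, List.prod_cons]
    exact (hψ D List.mem_cons_self).mul (ih (fun E hE => hψ E (List.mem_cons_of_mem D hE)) hL.2)
      (Set.disjoint_iUnion₂_right.mpr hL.1)

lemma IsPartialConj.toOut_eq_one (hφ : IsPartialConj G x S φ) (hS : ∀ v ∉ S, G.Adj x v) :
    toOut (Raag G) φ = 1 := by
  have : φ = MulAut.conj (gen G x)⁻¹ := mulAut_ext fun v => by
    rw [MulAut.conj_apply, inv_inv]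
    by_cases hv : v ∈ S
    · exact hφ.1 v hv
    · rw [hφ.2 v hv, mul_assoc, ← (gen_commute (hS v hv)).eq, inv_mul_cancel_left]
  exact (QuotientGroup.eq_one_iff _).mpr ⟨_, this.symm⟩

end PartialConjugation

section VirtuallyObtained

variable {x : V} {C : Set V} {P Q : V → Prop}

lemma VirtObtAux.mono (h : VirtObtAux G x C P) (hPQ : ∀ v, P v → Q v) : VirtObtAux G x C Q := by
  obtain ⟨n, hn, m, y, D, ε, φ, ψ, hy, rest⟩ := h
  exact ⟨n, hn, m, y, D, ε, φ, ψ, fun i => hPQ _ (hy i), rest⟩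

lemma virtObtAux_of_list {φ : MulAut (Raag G)} (hφ : IsPartialConj G x C φ) {n : ℤ}
    (hn : n ≠ 0) {y : V} (hy : P y) (L : List (Set V)) (ψ : Set V → MulAut (Raag G))
    (hL : ∀ D ∈ L, IsCC G (star G y)ᶜ D ∧ IsPartialConj G x D (ψ D))
    (h : toOut (Raag G) φ ^ n = (L.map fun D => toOut (Raag G) (ψ D)).prod) :
    VirtObtAux G x C P := by
  refine ⟨n, hn, L.length, fun _ => y, fun i => L[(i : ℕ)], fun _ => 1, φ,
    fun i => ψ L[(i : ℕ)], fun _ => hy, fun i => (hL _ (List.getElem_mem _)).1,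
    fun _ => Or.inl rfl, hφ,    fun i => (hL _ (List.getElem_mem _)).2, ?_⟩
  rw [← List.ofFn_getElem_eq_map] at h
  simpa using h

lemma virtObtAux_of_isCC {φ : MulAut (Raag G)} (hφ : IsPartialConj G x C φ) {y : V} (hy : P y)
    (hC : IsCC G (star G y)ᶜ C) : VirtObtAux G x C P :=
  virtObtAux_of_list hφ one_ne_zero hy [C] (fun _ => φ) (by simpa using ⟨hC, hφ⟩) (by simp)

/-- `π^x_{y}` times the product of all `π^x_D` over the `y`-components `D` conjugates every
vertex outside `lk(x) = lk(y)` by `x`. -/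
lemma virtObtAux_singleton [Finite V] {y : V} (hlk : G.neighborSet x = G.neighborSet y)
    (hy : P y) (hC : IsCC G (star G x)ᶜ {y}) : VirtObtAux G x {y} P := by
  obtain ⟨φ, hφ⟩ := (starSeparated_of_isCC rfl hC).exists_isPartialConj
  have : ∀ D, ∃ ψ : MulAut (Raag G), IsCC G (star G y)ᶜ D → IsPartialConj G x D ψ := by
    intro D
    by_cases hD : IsCC G (star G y)ᶜ D
    · obtain ⟨ψ, hψ⟩ := (starSeparated_of_isCC hlk hD).exists_isPartialConj
      exact ⟨ψ, fun _ => hψ⟩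
    · exact ⟨1, fun h => absurd h hD⟩
  choose ψ hψ using this
  set L := (Set.toFinite {D | IsCC G (star G y)ᶜ D}).toFinset.toList
  have hL : ∀ D, D ∈ L ↔ IsCC G (star G y)ᶜ D := by simp [L]
  have hdisj : L.Pairwise Disjoint := (Finset.nodup_toList _).imp_of_mem
    fun hD hE hne => ((hL _).mp hD).disjoint_of_ne ((hL _).mp hE) hne
  have hprod := isPartialConj_list_prod L ψ (fun D hD => hψ D ((hL D).mp hD)) hdisj
  have hyL : Disjoint {y} (⋃ D ∈ L, D) := by
    refine Set.disjoint_singleton_left.mpr fun hy => ?_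
    obtain ⟨D, hD, hyD⟩ := Set.mem_iUnion₂.mp hy
    obtain ⟨c, -, rfl⟩ := isCC_iff.mp ((hL D).mp hD)
    exact componentIn_subset hyD (Set.mem_insert y _)
  have hcover : ∀ v ∉ {y} ∪ ⋃ D ∈ L, D, G.Adj x v := by
    intro v hv
    rw [Set.mem_union, not_or, Set.mem_singleton_iff] at hv
    by_cases hvy : v ∈ (star G y)ᶜ
    · exact absurd (Set.mem_iUnion₂.mpr ⟨_, (hL _).mpr (isCC_iff.mpr ⟨v, hvy, rfl⟩),
        mem_componentIn_self hvy⟩) hv.2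
    · rcases mem_star_iff.mp (Set.notMem_compl_iff.mp hvy) with rfl | hyv
      exacts [absurd rfl hv.1, (hlk ▸ hyv : v ∈ G.neighborSet x)]
  have hinner := (hφ.mul hprod hyL).toOut_eq_one hcover
  refine virtObtAux_of_list hφ (n := -1) (by norm_num) hy L ψ
    (fun D hD => ⟨(hL D).mp hD, hψ D ((hL D).mp hD)⟩) ?_
  rw [map_mul] at hinner
  rw [zpow_neg_one, inv_eq_of_mul_eq_one_right hinner, map_list_prod, List.map_map]
  rfl

lemma virtObtDom_of_equivDom [Finite V] {y : V} (he : EquivDom G y x) (hyx : y ≠ x)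
    (hC : IsCC G (star G x)ᶜ C) : VirtObtDom G x C := by
  have hy : Dom G y x ∧ y ≠ x := ⟨he.1, hyx⟩
  obtain ⟨φ, hφ⟩ := (starSeparated_of_isCC rfl hC).exists_isPartialConj
  by_cases hxy : G.Adj x y
  · exact virtObtAux_of_isCC hφ hy (he.star_eq hxy ▸ hC)
  have hlk := he.neighborSet_eq hxy
  by_cases hyC : y ∈ C
  · obtain rfl := isCC_eq_singleton_of_neighborSet_eq hlk hC hyC
    exact virtObtAux_singleton hlk hy hC
  · exact virtObtAux_of_isCC hφ hy (isCC_star_of_neighborSet_eq hlk hC hyC)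

end VirtuallyObtained

end RaagPaper

open RaagPaper in
/-- `Γ` satisfies condition (A2') iff for every vertex `x` and every
`x`-component `C` the partial conjugation `π^x_C` is virtually obtained from dominated
components. -/
theorem statement9 {V : Type} [Fintype V] (G : SimpleGraph V) :
    CondA2' G ↔
      ∀ (x : V) (C : Set V), IsCC G ((star G x)ᶜ) C → VirtObtDom G x C := by
  constructor
  · intro hA2 x C hC
    by_cases hNE : VirtObtNE G x C
    · exact hNE.mono fun y ⟨hyx, hne⟩ => ⟨hyx, by rintro rfl; exact hne (EquivDom.refl y)⟩
    have hx : x ∈ eqClass G x := EquivDom.refl x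
    have hPrincipal : Principal G (eqClass G x) C := fun hNP => hNE (hNP x hx hC)
    obtain ⟨y, hy, hyx⟩ := (hA2 _ C ⟨x, rfl⟩ ⟨x, hx, hC⟩ hPrincipal).exists_ne x
    exact virtObtDom_of_equivDom hy hyx hC
  · rintro h X C ⟨x₀, rfl⟩ - hPrincipal
    by_contra hX
    refine hPrincipal fun x hx hC => (h x C hC).mono fun y ⟨hyx, hne⟩ => ⟨hyx, fun he => ?_⟩
    exact hne (Set.not_nontrivial_iff.mp hX (he.trans hx) hx)
end

section
/- Let Γ be a finite simplicial graph, x a vertex of Γ, and let C_i and C_j be two distinct x-components. Suppose z_i ∈ C_i and z_j ∈ C_j satisfy z_i ≤ z_j. Then lk(z_i) ⊆ st(x) (in particular z_i ≤ x) and lk(z_i) ⊆ lk(z_j). -/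
open SimpleGraph

namespace RaagPaper

lemma cc_subset {V : Type} {G : SimpleGraph V} {S C : Set V} (h : IsCC G S C) :
    C ⊆ S := by
  obtain ⟨v, rfl⟩ := h
  rintro w ⟨hw, -⟩; exact hw

lemma cc_adj_mem {V : Type} {G : SimpleGraph V} {S C : Set V} (h : IsCC G S C)
    {a b : V} (ha : a ∈ C) (hb : b ∈ S) (hab : G.Adj a b) : b ∈ C := by
  obtain ⟨v, rfl⟩ := h
  obtain ⟨haS, hr⟩ := ha
  exact ⟨hb, (SimpleGraph.Adj.reachable (by exact hab.symm : (G.induce S).Adj ⟨b, hb⟩ ⟨a, haS⟩)).trans hr⟩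

lemma cc_eq_of_mem {V : Type} {G : SimpleGraph V} {S Ci Cj : Set V}
    (hi : IsCC G S Ci) (hj : IsCC G S Cj) {w : V} (hwi : w ∈ Ci) (hwj : w ∈ Cj) :
    Ci = Cj := by
  obtain ⟨vi, rfl⟩ := hi
  obtain ⟨vj, rfl⟩ := hj
  obtain ⟨hwS, hri⟩ := hwi
  obtain ⟨hwS', hrj⟩ := hwj
  have hij : (G.induce S).Reachable vi vj := hri.symm.trans hrj
  ext u
  constructor
  · rintro ⟨hu, hr⟩; exact ⟨hu, hr.trans hij⟩
  · rintro ⟨hu, hr⟩; exact ⟨hu, hr.trans hij.symm⟩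

end RaagPaper

open RaagPaper in
/-- If `z_i, z_j` lie in distinct `x`-components and `z_i ≤ z_j`, then
`lk(z_i) ⊆ st(x)` (in particular `z_i ≤ x`) and `lk(z_i) ⊆ lk(z_j)`. -/
theorem statement11 {V : Type} [Fintype V] (G : SimpleGraph V) (x : V)
    (Ci Cj : Set V) (hCi : IsCC G ((star G x)ᶜ) Ci) (hCj : IsCC G ((star G x)ᶜ) Cj)
    (hne : Ci ≠ Cj) (zi zj : V) (hzi : zi ∈ Ci) (hzj : zj ∈ Cj)
    (hdom : Dom G zi zj) :
    G.neighborSet zi ⊆ star G x ∧ G.neighborSet zi ⊆ G.neighborSet zj := by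
  have hdisj : ∀ w, w ∈ Ci → w ∉ Cj := fun w hwi hwj =>
    hne (cc_eq_of_mem hCi hCj hwi hwj)
  have hziS : zi ∉ star G x := cc_subset hCi hzi
  constructor
  · intro w hw
    by_contra hwst
    have hwCi : w ∈ Ci := cc_adj_mem hCi hzi hwst hw
    rcases hdom hw with heq | hadj
    · exact hdisj w hwCi (heq ▸ hzj)
    · have hzjS : zj ∉ star G x := cc_subset hCj hzj
      have : zj ∈ Ci := cc_adj_mem hCi hwCi hzjS hadj.symm
      exact hdisj zj this hzj
  · intro w hw
    rcases hdom hw with heq | hadj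
    · exfalso
      subst heq
      have hzjS : w ∉ star G x := cc_subset hCj hzj
      have : w ∈ Ci := cc_adj_mem hCi hzi hzjS hw
      exact hne (cc_eq_of_mem hCi hCj this hzj)
    · exact hadj
end

section
/- Let Γ be a finite simplicial graph and let x, z be vertices with z ≤ x, z ≠ x, and z ∉ st(x). Let D be a z-component. Then either D is an x-component, or x ∈ D. -/
open SimpleGraph

private lemma exists_adj_of_walk {α : Type} {H : SimpleGraph α} {u t : α}
    (p : H.Walk u t) (h : u ≠ t) : ∃ c, H.Adj u c := by
  cases p with
  | nil => exact absurd rfl h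
  | cons hadj _ => exact ⟨_, hadj⟩

open RaagPaper in
private lemma reach_transfer {V : Type} (G : SimpleGraph V) {S T : Set V} (v : S)
    (hvT : (v : V) ∈ T)
    (hT : ∀ w (hw : w ∈ S), (G.induce S).Reachable ⟨w, hw⟩ v → w ∈ T) :
    ∀ (u : S), (G.induce S).Reachable u v →
      ∃ hu : (u : V) ∈ T, (G.induce T).Reachable ⟨u, hu⟩ ⟨v, hvT⟩ := by
  intro u hu
  obtain ⟨p⟩ := hu
  induction p with
  | nil => exact ⟨hvT, Reachable.refl _⟩
  | @cons a c _ hadj p ih =>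
      obtain ⟨hcT, hreach⟩ := ih hvT hT
      have haT : (a : V) ∈ T := hT a a.2 ⟨SimpleGraph.Walk.cons hadj p⟩
      have hGadj : G.Adj (a : V) (c : V) := hadj
      have : (G.induce T).Adj ⟨a, haT⟩ ⟨c, hcT⟩ := hGadj
      exact ⟨haT, (this.reachable).trans hreach⟩

open RaagPaper in
/-- If `z ≤ x`, `z ≠ x`, `z ∉ st(x)` and `D` is a `z`-component, then
either `D` is an `x`-component or `x ∈ D`. -/
theorem statement12 {V : Type} [Fintype V] (G : SimpleGraph V) (x z : V)
    (hzx : Dom G z x) (hne : z ≠ x) (hzst : z ∉ star G x)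
    (D : Set V) (hD : IsCC G ((star G z)ᶜ) D) :
    IsCC G ((star G x)ᶜ) D ∨ x ∈ D := by
  obtain ⟨v, rfl⟩ := hD
  have hxz : ¬ G.Adj x z := fun h => hzst (Set.mem_insert_iff.mpr (Or.inr h))
  have hxS : x ∈ (star G z)ᶜ := by
    intro hx
    rcases Set.mem_insert_iff.mp hx with h | h
    · exact hne h.symm
    · exact hxz (G.adj_symm h)
  by_cases hx : x ∈ {w : V | ∃ h : w ∈ (star G z)ᶜ, (G.induce _).Reachable ⟨w, h⟩ v}
  · exact Or.inr hx
  · left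
    have hA : ∀ w (hw : w ∈ (star G z)ᶜ),
        (G.induce ((star G z)ᶜ)).Reachable ⟨w, hw⟩ v → w ∈ (star G x)ᶜ := by
      intro w hw hr hwst
      rcases Set.mem_insert_iff.mp hwst with h | h
      · subst h; exact hx ⟨hw, hr⟩
      · have hadj : (G.induce ((star G z)ᶜ)).Adj ⟨x, hxS⟩ ⟨w, hw⟩ := h
        exact hx ⟨hxS, hadj.reachable.trans hr⟩
    have hvT : (v : V) ∈ (star G x)ᶜ := hA v v.2 (Reachable.refl _)
    refine ⟨⟨v, hvT⟩, ?_⟩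
    ext w
    constructor
    · rintro ⟨hw, hr⟩
      exact reach_transfer G v hvT hA ⟨w, hw⟩ hr
    · rintro ⟨hw, hr⟩
      have hB : ∀ w' (hw' : w' ∈ (star G x)ᶜ),
          (G.induce ((star G x)ᶜ)).Reachable ⟨w', hw'⟩ ⟨v, hvT⟩ → w' ∈ (star G z)ᶜ := by
        intro w' hw' hr' hwz
        rcases Set.mem_insert_iff.mp hwz with h | h
        · have hvz : (v : V) ≠ z := by
            intro hvz
            apply v.2
            rw [hvz]
            exact Set.mem_insert _ _
          obtain ⟨p⟩ := hr'
          have hneq : (⟨w', hw'⟩ : ((star G x)ᶜ : Set V)) ≠ ⟨(v : V), hvT⟩ := by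
            intro heq
            have := congrArg Subtype.val heq
            simp only at this
            exact hvz (this.symm.trans h)
          obtain ⟨c, hadj⟩ := exists_adj_of_walk p hneq
          have hGadj : G.Adj w' (c : V) := hadj
          rw [h] at hGadj
          exact c.2 (hzx hGadj)
        · exact hw' (hzx h)
      obtain ⟨hwz, hr2⟩ := reach_transfer G ⟨(v : V), hvT⟩ v.2 hB ⟨w, hw⟩ hr
      exact ⟨hwz, hr2⟩
end

section
/- Let Γ be a finite simplicial graph, x a vertex of Γ, and C_0,…,C_r the x-components. For each i, suppose given a subset Z_i ⊆ C_i such that Z_i = C_i if C_i is a singleton, and otherwise Z_i is a domination-equivalence class contained in C_i with the property that every vertex of C_i dominated by some element of Z_i belongs to Z_i. Let Y = {y ∈ st(x) : y ≤ x} and let L = Z_0 ∪ ⋯ ∪ Z_r ∪ Y ∪ {x}. Then L is closed under domination: if v ∈ L and u ≤ v, then u ∈ L. -/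
open SimpleGraph

open RaagPaper

lemma isolated_reach {V : Type} (G : SimpleGraph V) (S : Set V) (a b : S)
    (hiso : ∀ w ∈ S, ¬ G.Adj ↑a w) (h : (G.induce S).Reachable a b) : a = b := by
  obtain ⟨p⟩ := h
  cases p with
  | nil => rfl
  | cons h p => exact absurd ((comap_adj).mp h) (hiso _ (Subtype.coe_prop _))

section
variable {V : Type} (G : SimpleGraph V) (S : Set V)

lemma cc_sub {C : Set V} (h : IsCC G S C) : C ⊆ S := by
  obtain ⟨v, rfl⟩ := h
  rintro w ⟨hw, -⟩; exact hw

lemma cc_adj {C : Set V} (h : IsCC G S C) {u w : V} (hw : w ∈ C) (hu : u ∈ S)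
    (hadj : G.Adj u w) : u ∈ C := by
  obtain ⟨v, rfl⟩ := h
  obtain ⟨hwS, hr⟩ := hw
  have hadj' : (G.induce S).Adj ⟨u, hu⟩ ⟨w, hwS⟩ := hadj
  exact ⟨hu, (Reachable.trans hadj'.reachable hr)⟩

lemma cc_singleton {C : Set V} (h : IsCC G S C) {u : V} (hu : u ∈ C)
    (hiso : ∀ w ∈ S, ¬ G.Adj u w) : C = {u} := by
  obtain ⟨v, rfl⟩ := h
  obtain ⟨huS, hr⟩ := hu
  have hv : v = ⟨u, huS⟩ := (isolated_reach G S ⟨u, huS⟩ v hiso hr).symm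
  subst hv
  ext w
  constructor
  · rintro ⟨hwS, hr⟩
    have := isolated_reach G S ⟨u, huS⟩ ⟨w, hwS⟩ hiso hr.symm
    simpa using (congrArg Subtype.val this).symm
  · rintro rfl; exact ⟨huS, Reachable.refl _⟩

end

open RaagPaper in
/-- With `C_0,…,C_r` the `x`-components, subsets `Z_i ⊆ C_i` as
described (`Z_i = C_i` when `C_i` is a singleton, and otherwise `Z_i` is a
domination-equivalence class in `C_i` such that every vertex of `C_i` dominated by an
element of `Z_i` lies in `Z_i`), and `Y = {y ∈ st(x) : y ≤ x}`, the set
`L = Z_0 ∪ ⋯ ∪ Z_r ∪ Y ∪ {x}` is closed under domination. -/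
theorem statement14 {V : Type} [Fintype V] (G : SimpleGraph V) (x : V) (r : ℕ)
    (C : Fin (r + 1) → Set V)
    (hC : ∀ i, IsCC G ((star G x)ᶜ) (C i))
    (hall : ∀ S : Set V, IsCC G ((star G x)ᶜ) S → ∃ i, S = C i)
    (Z : Fin (r + 1) → Set V)
    (hZsub : ∀ i, Z i ⊆ C i)
    (hZsingle : ∀ i, (∃ w, C i = {w}) → Z i = C i)
    (hZclass : ∀ i, (¬ ∃ w, C i = {w}) →
      (∃ z, Z i = eqClass G z) ∧ (∀ u ∈ C i, (∃ z ∈ Z i, Dom G u z) → u ∈ Z i)) :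
    ∀ v ∈ (⋃ i, Z i) ∪ {y | y ∈ star G x ∧ Dom G y x} ∪ {x},
      ∀ u : V, Dom G u v →
        u ∈ (⋃ i, Z i) ∪ {y | y ∈ star G x ∧ Dom G y x} ∪ {x} := by
  set S := (star G x)ᶜ with hS
  -- every vertex of S lies in some component
  have hmem : ∀ u, u ∈ S → ∃ i, u ∈ C i := by
    intro u hu
    obtain ⟨i, hi⟩ := hall {w | ∃ h : w ∈ S, (G.induce S).Reachable ⟨w, h⟩ ⟨u, hu⟩}
      ⟨⟨u, hu⟩, rfl⟩
    exact ⟨i, by rw [← hi]; exact ⟨hu, Reachable.refl _⟩⟩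
  -- key: dominated by x implies in L
  have key : ∀ u, Dom G u x →
      u ∈ (⋃ i, Z i) ∪ {y | y ∈ star G x ∧ Dom G y x} ∪ {x} := by
    intro u hdom
    by_cases hu : u ∈ star G x
    · exact Or.inl (Or.inr ⟨hu, hdom⟩)
    · obtain ⟨i, hi⟩ := hmem u hu
      have hiso : ∀ w ∈ S, ¬ G.Adj u w := by
        intro w hw hadj
        exact hw (hdom hadj)
      have hsing : C i = {u} := cc_singleton G S (hC i) hi hiso
      have : Z i = C i := hZsingle i ⟨u, hsing⟩
      exact Or.inl (Or.inl (Set.mem_iUnion.mpr ⟨i, this ▸ hi⟩))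
  rintro v hv u hdom
  rcases hv with (hv | hv) | hv
  · -- v ∈ ⋃ Z i
    obtain ⟨i, hvZ⟩ := Set.mem_iUnion.mp hv
    have hvC : v ∈ C i := hZsub i hvZ
    have hvS : v ∈ S := cc_sub G S (hC i) hvC
    have hvx : v ≠ x := fun h => hvS (by rw [h]; exact Set.mem_insert x _)
    have hvnadj : ¬ G.Adj x v := fun h => hvS (Set.mem_insert_of_mem _ h)
    by_cases hux : u = x
    · exact Or.inr hux
    · have huS : u ∈ S := by
        intro hustar
        rcases hustar with h | h
        · exact hux h
        · -- x ∈ lk(u) ⊆ st(v)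
          have : x ∈ star G v := hdom (G.adj_symm h)
          rcases this with h' | h'
          · exact hvx h'.symm
          · exact hvnadj (G.adj_symm h')
      by_cases hnb : ∃ w ∈ S, G.Adj u w
      · -- u is in C i
        obtain ⟨w, hwS, hadj⟩ := hnb
        have hwst : w ∈ star G v := hdom hadj
        have huC : u ∈ C i := by
          rcases hwst with h' | h'
          · exact cc_adj G S (hC i) (h' ▸ hvC) huS hadj
          · have hwC : w ∈ C i := cc_adj G S (hC i) hvC hwS (G.adj_symm h')
            exact cc_adj G S (hC i) hwC huS hadj
        by_cases hsing : ∃ w, C i = {w}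
        · exact Or.inl (Or.inl (Set.mem_iUnion.mpr ⟨i, (hZsingle i hsing) ▸ huC⟩))
        · exact Or.inl (Or.inl (Set.mem_iUnion.mpr
            ⟨i, (hZclass i hsing).2 u huC ⟨v, hvZ, hdom⟩⟩))
      · push_neg at hnb
        obtain ⟨j, hj⟩ := hmem u huS
        have hsing : C j = {u} := cc_singleton G S (hC j) hj hnb
        exact Or.inl (Or.inl (Set.mem_iUnion.mpr ⟨j, (hZsingle j ⟨u, hsing⟩) ▸ hj⟩))
  · -- v ∈ Y
    obtain ⟨hvst, hvdom⟩ := hv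
    apply key
    intro w hw
    have := hdom hw
    rcases this with h' | h'
    · exact h' ▸ hvst
    · exact hvdom h'
  · -- v = x
    exact key u (hv ▸ hdom)
end

section
/- Let Γ be a finite simplicial graph, x a vertex, and C an x-component containing more than one vertex. Then for every z ∈ C, the entire domination-equivalence class [z] of z is contained in C. -/
open SimpleGraph

lemma exists_adj_of_reachable_ne {W : Type} {G : SimpleGraph W} {u v : W}
    (h : G.Reachable u v) (hne : u ≠ v) : ∃ w, G.Adj u w := by
  obtain ⟨p⟩ := h
  cases p with
  | nil => exact absurd rfl hne
  | cons h _ => exact ⟨_, h⟩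

open RaagPaper in
/-- If an `x`-component `C` has more than one vertex, then for every
`z ∈ C` the whole domination-equivalence class of `z` is contained in `C`. -/
theorem statement15 {V : Type} [Fintype V] (G : SimpleGraph V) (x : V)
    (C : Set V) (hC : IsCC G ((star G x)ᶜ) C) (hnt : C.Nontrivial) :
    ∀ z ∈ C, eqClass G z ⊆ C := by
  obtain ⟨v, hCeq⟩ := hC
  intro z hz w hw
  by_cases hwz : w = z
  · exact hwz ▸ hz
  have hz' := hz
  rw [hCeq] at hz'
  obtain ⟨hzS, hzv⟩ := hz'
  -- find c ∈ C with c ≠ z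
  obtain ⟨a, ha, b, hb, hab⟩ := hnt
  have hc : ∃ c ∈ C, c ≠ z := by
    by_cases h : a = z
    · exact ⟨b, hb, by rintro rfl; exact hab h⟩
    · exact ⟨a, ha, h⟩
  obtain ⟨c, hcC, hcz⟩ := hc
  rw [hCeq] at hcC
  obtain ⟨hcS, hcv⟩ := hcC
  have hzc : (G.induce ((star G x)ᶜ : Set V)).Reachable ⟨z, hzS⟩ ⟨c, hcS⟩ :=
    hzv.trans hcv.symm
  have hne : (⟨z, hzS⟩ : ((star G x)ᶜ : Set V)) ≠ ⟨c, hcS⟩ := by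
    intro h
    exact hcz (congrArg Subtype.val h).symm
  obtain ⟨z', hadj⟩ := exists_adj_of_reachable_ne hzc hne
  -- z' is a neighbor of z inside S
  have hadjG : G.Adj z z'.1 := hadj
  have hz'S : (z' : V) ∈ ((star G x)ᶜ : Set V) := z'.2
  have hz'v : (G.induce ((star G x)ᶜ : Set V)).Reachable z' v :=
    (hadj.symm.reachable).trans hzv
  obtain ⟨hwdom, hzdom⟩ := hw
  -- w ∉ star G x
  have hwS : w ∈ ((star G x)ᶜ : Set V) := by
    intro hwst
    rcases hwst with rfl | hxw
    · -- w = x : z' ∈ lk z ⊆ st w = st x, contradiction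
      have := hzdom hadjG
      exact hz'S this
    · -- Adj x w : x ∈ lk w ⊆ st z
      have hx : x ∈ star G z := hwdom (G.adj_symm hxw)
      rcases hx with rfl | hxz
      · exact hzS (Set.mem_insert _ _)
      · exact hzS (Set.mem_insert_iff.mpr (Or.inr (G.adj_symm hxz)))
  -- z' ∈ st w : either z' = w or Adj w z'
  have hz'st : (z' : V) ∈ star G w := hzdom hadjG
  rcases hz'st with h | h
  · -- w = z'
    rw [hCeq]
    exact ⟨h ▸ hz'S, by
      have : (⟨w, h ▸ hz'S⟩ : ((star G x)ᶜ : Set V)) = z' := Subtype.ext h.symm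
      rw [this]; exact hz'v⟩
  · -- Adj w z'
    rw [hCeq]
    refine ⟨hwS, ?_⟩
    have hadj2 : (G.induce ((star G x)ᶜ : Set V)).Adj ⟨w, hwS⟩ z' := h
    exact hadj2.reachable.trans hz'v
end

section
/- Suppose the finite simplicial graph Γ has no SIL. Let u, v, x, y be vertices with u ≤ v, u ≠ v, x ≤ y, x ≠ y, and suppose u ≠ y and v ≠ x. Then the transvections R_u^v and R_x^y commute in Aut(A_Γ). -/
open SimpleGraph

section Aux
open RaagPaper

namespace RaagPaper

lemma pg_hom_ext {α : Type*} {rels : Set (FreeGroup α)} {G : Type*} [Group G]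
    (f g : PresentedGroup rels →* G) (h : ∀ a, f (PresentedGroup.of a) = g (PresentedGroup.of a)) :
    f = g := by
  have : f.comp (QuotientGroup.mk' (Subgroup.normalClosure rels)) =
      g.comp (QuotientGroup.mk' (Subgroup.normalClosure rels)) :=
    FreeGroup.ext_hom _ _ h
  exact QuotientGroup.monoidHom_ext _ this

lemma gen_comm {V : Type} (G : SimpleGraph V) {a b : V} (hab : G.Adj a b) :
    gen G a * gen G b = gen G b * gen G a := by
  have hr : (FreeGroup.of a * FreeGroup.of b * (FreeGroup.of a)⁻¹ * (FreeGroup.of b)⁻¹) ∈ Rels G :=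
    ⟨a, b, hab, rfl⟩
  have h1 : (PresentedGroup.mk (Rels G))
      (FreeGroup.of a * FreeGroup.of b * (FreeGroup.of a)⁻¹ * (FreeGroup.of b)⁻¹) = 1 := by
    exact (QuotientGroup.eq_one_iff _).mpr (Subgroup.subset_normalClosure hr)
  have h2 : gen G a * gen G b * (gen G a)⁻¹ * (gen G b)⁻¹ = 1 := by
    simpa [gen, PresentedGroup.of, map_mul, map_inv] using h1
  have := mul_eq_one_iff_eq_inv.mp h2
  group at this ⊢
  calc gen G a * gen G b = (gen G a * gen G b * (gen G a)⁻¹ * (gen G b)⁻¹) * (gen G b * gen G a) := by group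
    _ = gen G b * gen G a := by rw [h2]; group

lemma adj_of_double_dom {V : Type} (G : SimpleGraph V) (hnosil : HasNoSIL G)
    {u v y : V} (huv : Dom G u v) (huy : Dom G u y)
    (h1 : u ≠ v) (h2 : u ≠ y) (h3 : v ≠ y) : G.Adj v y := by
  by_contra hvy
  -- first: u is not adjacent to v, nor to y
  have hnuv : ¬ G.Adj u v := by
    intro h
    have : v ∈ star G y := huy h
    rcases this with h' | h'
    · exact h3 h'
    · exact hvy h'.symm
  have hnuy : ¬ G.Adj u y := by
    intro h
    have : y ∈ star G v := huv h
    rcases this with h' | h'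
    · exact h3 h'.symm
    · exact hvy h'
  -- lk(u) ⊆ lk(v) ∩ lk(y)
  have hlk : G.neighborSet u ⊆ G.neighborSet v ∩ G.neighborSet y := by
    intro w hw
    have hwv : w ∈ star G v := huv hw
    have hwy : w ∈ star G y := huy hw
    constructor
    · rcases hwv with h' | h'
      · exact absurd (h' ▸ hw) hnuv
      · exact h'
    · rcases hwy with h' | h'
      · exact absurd (h' ▸ hw) hnuy
      · exact h'
  set S : Set V := (G.neighborSet v ∩ G.neighborSet y)ᶜ with hS
  have huS : u ∈ S := by
    intro h
    exact hnuv h.1.symm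
  -- SIL (v, y | u)
  apply hnosil v y u
  refine ⟨h3, h1.symm, h2.symm, hvy, fun h => hnuv h.symm, fun h => hnuy h.symm, ?_⟩
  rintro C ⟨c, rfl⟩ huC
  obtain ⟨hu', hru⟩ := huC
  have key : ∀ w : V, w ≠ u → ∀ hw : w ∈ S, ¬ (G.induce S).Reachable ⟨w, hw⟩ c → True := fun _ _ _ _ => trivial
  have noreach : ∀ (w : V) (hw : w ∈ S), w ≠ u → ¬ (G.induce S).Reachable ⟨u, hu'⟩ ⟨w, hw⟩ := by
    intro w hw hwu hr
    obtain ⟨p⟩ := hr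
    have hne : (⟨u, hu'⟩ : S) ≠ ⟨w, hw⟩ := by
      intro h; exact hwu (congrArg Subtype.val h).symm
    have hnn := SimpleGraph.Walk.not_nil_of_ne (p := p) hne
    obtain ⟨z, hadj, q, rfl⟩ := SimpleGraph.Walk.not_nil_iff.mp hnn
    have : (z : V) ∈ G.neighborSet u := hadj
    exact z.2 (hlk this)
  constructor
  · rintro ⟨hv', hrv⟩
    exact noreach v hv' h1.symm (hru.trans hrv.symm)
  · rintro ⟨hy', hry⟩
    exact noreach y hy' h2.symm (hru.trans hry.symm)

end RaagPaper
end Aux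

open RaagPaper in
/-- If `Γ` has no SIL, `u ≤ v`, `u ≠ v`, `x ≤ y`, `x ≠ y`, `u ≠ y` and
`v ≠ x`, then the transvections `R_u^v` and `R_x^y` commute in `Aut(A_Γ)`. -/
theorem statement18 {V : Type} [Fintype V] (G : SimpleGraph V)
    (hnosil : HasNoSIL G) (u v x y : V)
    (huv : Dom G u v) (huvne : u ≠ v) (hxy : Dom G x y) (hxyne : x ≠ y)
    (huy : u ≠ y) (hvx : v ≠ x)
    (φ ψ : MulAut (Raag G))
    (hφ : IsTransvection G u v φ) (hψ : IsTransvection G x y ψ) :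
    φ * ψ = ψ * φ := by
  obtain ⟨hφu, hφw⟩ := hφ
  obtain ⟨hψx, hψw⟩ := hψ
  have key : ∀ a : V, φ (ψ (gen G a)) = ψ (φ (gen G a)) := by
    by_cases hux : u = x
    · subst hux
      -- x = u: both transvections have source u; need [v,y] = 1
      have comm : gen G v * gen G y = gen G y * gen G v := by
        by_cases hvy : v = y
        · rw [hvy]
        · exact gen_comm G (adj_of_double_dom G hnosil huv hxy huvne huy hvy)
      intro a
      by_cases hau : a = u
      · rw [hau, hψx, hφu, map_mul, map_mul, hφu, hψx, hφw y huy.symm,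
          hψw v huvne.symm, mul_assoc, mul_assoc, comm]
      · rw [hψw a hau, hφw a hau, hψw a hau]
    · intro a
      by_cases hau : a = u
      · rw [hau, hψw u hux, hφu, map_mul, hψw u hux, hψw v hvx]
      · by_cases hax : a = x
        · rw [hax, hψx, hφw x (Ne.symm hux), hψx, map_mul, hφw x (Ne.symm hux),
            hφw y huy.symm]
        · rw [hψw a hax, hφw a hau, hψw a hax]
  have : (φ * ψ : MulAut (Raag G)).toMonoidHom = (ψ * φ : MulAut (Raag G)).toMonoidHom :=
    pg_hom_ext _ _ (fun a => key a)
  exact MulEquiv.toMonoidHom_injective this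
end
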